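/- arXiv:1501.00729 — 4 statements merged into one kernel-verified Lean document; each statement's English description precedes it below -/
import Mathlib

section
/- Let λ > 0, and let R : [0,∞) → ℝ^{n×n}, S : [0,∞) → ℝ^{n×s}, B : [0,∞) → ℝ^{n×n} be continuous and bounded, with R(t) positive semidefinite for all t. Suppose p̃ : [0,∞) → ℝⁿ, r̃ : [0,∞) → ℝ^s, d̃ : [0,∞) → ℝⁿ are C¹ and satisfy ṗ̃ = −(R + λ I_n) p̃ − S r̃ + B^⊤ d̃, ṙ̃ = S^⊤ p̃, and ḋ̃ = −B p̃. Then lim_{t→∞} p̃(t) = 0. -/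
open Matrix Set Filter Topology MeasureTheory
open scoped NNReal

/-!
The energy `E = ‖p̃‖² + ‖r̃‖² + ‖d̃‖²` satisfies `E' = -2 p̃ᵀ R p̃ - 2λ‖p̃‖² ≤ -2λ‖p̃‖²`,
because the skew-symmetric couplings through `S` and `B` cancel. Hence `E` is nonincreasing,
so `p̃, r̃, d̃` stay bounded, `∫₀^∞ ‖p̃‖² ≤ E(0)/(2λ)`, and `ṗ̃` is bounded since `R, S, B` are.
Thus `‖p̃‖²` is Lipschitz and integrable on `[0, ∞)`, and Barbalat's lemma gives `‖p̃‖² → 0`.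
-/

theorem dotProduct_self_nonneg {ι : Type*} [Fintype ι] (x : ι → ℝ) : 0 ≤ x ⬝ᵥ x :=
  Finset.sum_nonneg fun i _ => mul_self_nonneg (x i)

theorem sq_le_dotProduct_self {ι : Type*} [Fintype ι] (x : ι → ℝ) (i : ι) : x i ^ 2 ≤ x ⬝ᵥ x := by
  simpa [dotProduct, sq] using
    Finset.single_le_sum (fun j _ => mul_self_nonneg (x j)) (Finset.mem_univ i)

theorem norm_le_sqrt_dotProduct_self {ι : Type*} [Fintype ι] (x : ι → ℝ) : ‖x‖ ≤ √(x ⬝ᵥ x) :=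
  (pi_norm_le_iff_of_nonneg (Real.sqrt_nonneg _)).2 fun i =>
    Real.abs_le_sqrt (sq_le_dotProduct_self x i)

theorem tendsto_zero_of_tendsto_dotProduct_self {α ι : Type*} [Fintype ι] {l : Filter α}
    {f : α → ι → ℝ} (h : Tendsto (fun t => f t ⬝ᵥ f t) l (𝓝 0)) : Tendsto f l (𝓝 0) :=
  squeeze_zero_norm (fun t => norm_le_sqrt_dotProduct_self (f t)) (by simpa using h.sqrt)

theorem abs_dotProduct_le {ι : Type*} [Fintype ι] (x y : ι → ℝ) :
    |x ⬝ᵥ y| ≤ Fintype.card ι * (‖x‖ * ‖y‖) := by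
  calc |x ⬝ᵥ y| ≤ ∑ i, ‖x i‖ * ‖y i‖ := by
        simpa [dotProduct, abs_mul] using Finset.abs_sum_le_sum_abs (fun i => x i * y i) _
    _ ≤ ∑ _i : ι, ‖x‖ * ‖y‖ := Finset.sum_le_sum fun i _ =>
        mul_le_mul (norm_le_pi_norm x i) (norm_le_pi_norm y i) (norm_nonneg _) (norm_nonneg _)
    _ = Fintype.card ι * (‖x‖ * ‖y‖) := by simp

theorem norm_mulVec_le_of_abs_le {m n : Type*} [Fintype m] [Fintype n] {A : Matrix m n ℝ} {c : ℝ}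
    (hc : 0 ≤ c) (hA : ∀ i j, |A i j| ≤ c) (x : n → ℝ) :
    ‖A *ᵥ x‖ ≤ Fintype.card n * c * ‖x‖ :=
  (pi_norm_le_iff_of_nonneg (by positivity)).2 fun i => by
    rw [Real.norm_eq_abs, mulVec, mul_assoc]
    refine (abs_dotProduct_le _ _).trans (by gcongr; exact (pi_norm_le_iff_of_nonneg hc).2 (hA i))

theorem exists_forall_norm_mulVec_le {m n : Type*} [Fintype m] [Fintype n]
    {A : ℝ → Matrix m n ℝ} {U : Set ℝ} (hA : ∃ c, ∀ t ∈ U, ∀ i j, |A t i j| ≤ c) :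
    ∃ C, 0 ≤ C ∧ ∀ t ∈ U, ∀ x, ‖A t *ᵥ x‖ ≤ C * ‖x‖ := by
  obtain ⟨c, hc⟩ := hA
  exact ⟨Fintype.card n * max c 0, by positivity, fun t ht =>
    norm_mulVec_le_of_abs_le (le_max_right c 0) fun i j => (hc t ht i j).trans (le_max_left c 0)⟩

theorem HasDerivWithinAt.dotProduct_self {ι : Type*} [Fintype ι] {f : ℝ → ι → ℝ} {f' : ι → ℝ}
    {U : Set ℝ} {t : ℝ} (hf : HasDerivWithinAt f f' U t) :
    HasDerivWithinAt (fun u => f u ⬝ᵥ f u) (2 * (f t ⬝ᵥ f')) U t := by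
  have hi := hasDerivWithinAt_pi.1 hf
  have hsum : HasDerivWithinAt (fun u => f u ⬝ᵥ f u) (∑ i, (f' i * f t i + f t i * f' i)) U t :=
    HasDerivWithinAt.fun_sum fun i _ => (hi i).fun_mul (hi i)
  convert hsum using 1
  simp only [dotProduct, Finset.mul_sum]
  exact Finset.sum_congr rfl fun i _ => by ring

theorem lipschitzOnWith_dotProduct_self {ι : Type*} [Fintype ι] {f f' : ℝ → ι → ℝ} {U : Set ℝ}
    (hU : Convex ℝ U) (hf : ∀ t ∈ U, HasDerivWithinAt f (f' t) U t) {a M : ℝ}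
    (ha : ∀ t ∈ U, ‖f t‖ ≤ a) (hM : ∀ t ∈ U, ‖f' t‖ ≤ M) :
    LipschitzOnWith (Real.toNNReal (2 * (Fintype.card ι * (a * M)))) (fun t => f t ⬝ᵥ f t) U := by
  refine hU.lipschitzOnWith_of_nnnorm_hasDerivWithin_le (fun t ht => (hf t ht).dotProduct_self)
    fun t ht => ?_
  rw [← NNReal.coe_le_coe, coe_nnnorm, Real.coe_toNNReal', Real.norm_eq_abs, abs_mul, abs_two]
  refine le_max_of_le_left (mul_le_mul_of_nonneg_left ((abs_dotProduct_le _ _).trans ?_) two_pos.le)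
  have ha0 : 0 ≤ a := (norm_nonneg _).trans (ha t ht)
  gcongr
  exacts [ha t ht, hM t ht]

theorem add_intervalIntegral_le_of_hasDerivWithinAt {V V' g : ℝ → ℝ} {a t : ℝ}
    (hV : ∀ x ∈ Ici a, HasDerivWithinAt V (V' x) (Ici a) x) (hg : ContinuousOn g (Ici a))
    (hdiss : ∀ x ∈ Ioi a, V' x ≤ -g x) (ht : a ≤ t) :
    V t + ∫ x in a..t, g x ≤ V a := by
  have := intervalIntegral.sub_le_integral_of_hasDeriv_right_of_le ht
    (fun x hx => (hV x hx.1).continuousWithinAt.mono Icc_subset_Ici_self)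
    (fun x hx => (hV x hx.1.le).mono (Ioi_subset_Ioi hx.1.le |>.trans Ioi_subset_Ici_self))
    (hg.mono Icc_subset_Ici_self).integrableOn_Icc.neg fun x hx => hdiss x hx.1
  simp only [Pi.neg_apply, intervalIntegral.integral_neg] at this
  linarith

theorem mul_sub_le_intervalIntegral_of_lipschitzOnWith {g : ℝ → ℝ} {K : ℝ≥0} {U : Set ℝ}
    (hg : LipschitzOnWith K g U) {t δ : ℝ} (hδ : 0 ≤ δ) (hU : Icc t (t + δ) ⊆ U) :
    δ * (g t - K * δ) ≤ ∫ x in t..t + δ, g x := by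
  have htδ : t ≤ t + δ := le_add_of_nonneg_right hδ
  have hint : IntervalIntegrable g volume t (t + δ) :=
    (hg.continuousOn.mono (by rwa [uIcc_of_le htδ])).intervalIntegrable
  calc δ * (g t - K * δ) = ∫ _ in t..t + δ, (g t - K * δ) := by simp; ring
    _ ≤ ∫ x in t..t + δ, g x := by
      refine intervalIntegral.integral_mono_on htδ intervalIntegrable_const hint fun x hx => ?_
      have hdist : dist (g x) (g t) ≤ K * dist x t :=
        hg.dist_le_mul x (hU hx) t (hU ⟨le_rfl, htδ⟩)
      rw [Real.dist_eq, Real.dist_eq, abs_of_nonneg (sub_nonneg.2 hx.1)] at hdist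
      nlinarith [neg_abs_le (g x - g t), hx.2, K.coe_nonneg]

theorem tendsto_intervalIntegral_self_add_of_integrableOn_Ioi {g : ℝ → ℝ} {a : ℝ}
    (hg : IntegrableOn g (Ioi a)) (δ : ℝ) :
    Tendsto (fun t => ∫ x in t..t + δ, g x) atTop (𝓝 0) := by
  have hloc : ∀ b ∈ Ici a, IntervalIntegrable g volume a b := fun b hb =>
    (intervalIntegrable_iff_integrableOn_Ioc_of_le hb).2 (hg.mono_set Ioc_subset_Ioi_self)
  have hF := intervalIntegral_tendsto_integral_Ioi a hg tendsto_id
  have hFδ := intervalIntegral_tendsto_integral_Ioi a hg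
    (tendsto_atTop_add_const_right _ δ tendsto_id)
  have hwin := hFδ.sub hF
  rw [sub_self] at hwin
  refine hwin.congr' ?_
  filter_upwards [eventually_ge_atTop a, eventually_ge_atTop (a - δ)] with t ht htδ
  exact intervalIntegral.integral_interval_sub_left (hloc _ (by simp; linarith)) (hloc t ht)

/-- Barbalat's lemma. -/
theorem tendsto_zero_of_lipschitzOnWith_of_intervalIntegral_le {g : ℝ → ℝ} {K : ℝ≥0} {a C : ℝ}
    (hg0 : ∀ t ∈ Ici a, 0 ≤ g t) (hg : LipschitzOnWith K g (Ici a))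
    (hint : ∀ T ∈ Ici a, ∫ x in a..T, g x ≤ C) :
    Tendsto g atTop (𝓝 0) := by
  have hIoi : IntegrableOn g (Ioi a) := by
    refine integrableOn_Ioi_of_intervalIntegral_norm_bounded C a (b := id) (fun b => ?_)
      tendsto_id ?_
    · rcases le_total a b with hab | hba
      · exact (hg.continuousOn.mono (Icc_subset_Ici_self)).integrableOn_Icc.mono_set
          Ioc_subset_Icc_self
      · simp [Ioc_eq_empty_of_le hba]
    · filter_upwards [eventually_ge_atTop a] with T hT
      refine le_of_eq_of_le (intervalIntegral.integral_congr fun x hx => ?_) (hint T hT)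
      rw [id, uIcc_of_le hT] at hx
      exact Real.norm_of_nonneg (hg0 x hx.1)
  refine tendsto_order.2 ⟨fun b hb => ?_, fun ε hε => ?_⟩
  · filter_upwards [eventually_ge_atTop a] with t ht using hb.trans_le (hg0 t ht)
  set δ := ε / (2 * (K + 1)) with hδ
  have hδpos : 0 < δ := by positivity
  have hKδ : K * δ ≤ ε / 2 := by
    rw [hδ, mul_div_assoc', div_le_div_iff₀ (by positivity) two_pos]
    nlinarith [K.coe_nonneg]
  filter_upwards [eventually_ge_atTop a,
    (tendsto_intervalIntegral_self_add_of_integrableOn_Ioi hIoi δ).eventually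
      (gt_mem_nhds (by positivity : 0 < δ * (ε / 2)))] with t ht hwin
  have hlow := mul_sub_le_intervalIntegral_of_lipschitzOnWith hg hδpos.le
    (Icc_subset_Ici_self.trans (Ici_subset_Ici.2 ht))
  have : g t - K * δ < ε / 2 := lt_of_mul_lt_mul_left (hlow.trans_lt hwin) hδpos.le
  linarith

section ErrorDynamics

variable {m k : Type*} [Fintype m] [Fintype k]

def energy (p : ℝ → m → ℝ) (r : ℝ → k → ℝ) (d : ℝ → m → ℝ) (t : ℝ) : ℝ :=
  p t ⬝ᵥ p t + r t ⬝ᵥ r t + d t ⬝ᵥ d t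

theorem energy_nonneg (p : ℝ → m → ℝ) (r : ℝ → k → ℝ) (d : ℝ → m → ℝ) (t : ℝ) :
    0 ≤ energy p r d t :=
  add_nonneg (add_nonneg (dotProduct_self_nonneg _) (dotProduct_self_nonneg _))
    (dotProduct_self_nonneg _)

theorem norm_le_sqrt_energy (p : ℝ → m → ℝ) (r : ℝ → k → ℝ) (d : ℝ → m → ℝ) (t : ℝ) :
    ‖p t‖ ≤ √(energy p r d t) ∧ ‖r t‖ ≤ √(energy p r d t) ∧ ‖d t‖ ≤ √(energy p r d t) := by
  have hp := dotProduct_self_nonneg (p t)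
  have hr := dotProduct_self_nonneg (r t)
  have hd := dotProduct_self_nonneg (d t)
  refine ⟨?_, ?_, ?_⟩ <;>
    refine (norm_le_sqrt_dotProduct_self _).trans (Real.sqrt_le_sqrt ?_) <;>
    unfold energy <;> linarith

variable [DecidableEq m]

theorem hasDerivWithinAt_energy {lam : ℝ} {R B : Matrix m m ℝ} {S : Matrix m k ℝ}
    {p : ℝ → m → ℝ} {r : ℝ → k → ℝ} {d : ℝ → m → ℝ} {U : Set ℝ} {t : ℝ}
    (hp : HasDerivWithinAt p (-((R + lam • 1) *ᵥ p t) - S *ᵥ r t + Bᵀ *ᵥ d t) U t)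
    (hr : HasDerivWithinAt r (Sᵀ *ᵥ p t) U t) (hd : HasDerivWithinAt d (-(B *ᵥ p t)) U t) :
    HasDerivWithinAt (energy p r d)
      (-(2 * (p t ⬝ᵥ (R *ᵥ p t))) - 2 * lam * (p t ⬝ᵥ p t)) U t := by
  refine ((hp.dotProduct_self.add hr.dotProduct_self).add hd.dotProduct_self).congr_deriv ?_
  rw [dotProduct_transpose_mulVec S (r t) (p t), dotProduct_neg]
  simp only [add_mulVec, smul_mulVec, one_mulVec, dotProduct_add, dotProduct_sub, dotProduct_neg,
    dotProduct_smul, smul_eq_mul, dotProduct_transpose_mulVec B (p t) (d t)]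
  ring

theorem energy_add_intervalIntegral_le {lam a t : ℝ} {R B : ℝ → Matrix m m ℝ}
    {S : ℝ → Matrix m k ℝ} {p : ℝ → m → ℝ} {r : ℝ → k → ℝ} {d : ℝ → m → ℝ}
    (hR : ∀ t ∈ Ici a, ∀ x, 0 ≤ x ⬝ᵥ (R t *ᵥ x))
    (hp : ∀ t ∈ Ici a,
      HasDerivWithinAt p (-((R t + lam • 1) *ᵥ p t) - S t *ᵥ r t + (B t)ᵀ *ᵥ d t) (Ici a) t)
    (hr : ∀ t ∈ Ici a, HasDerivWithinAt r ((S t)ᵀ *ᵥ p t) (Ici a) t)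
    (hd : ∀ t ∈ Ici a, HasDerivWithinAt d (-(B t *ᵥ p t)) (Ici a) t) (ht : a ≤ t) :
    energy p r d t + 2 * lam * ∫ x in a..t, p x ⬝ᵥ p x ≤ energy p r d a := by
  rw [← intervalIntegral.integral_const_mul]
  refine add_intervalIntegral_le_of_hasDerivWithinAt
    (fun x hx => hasDerivWithinAt_energy (hp x hx) (hr x hx) (hd x hx))
    (continuousOn_const.mul fun x hx => (hp x hx).dotProduct_self.continuousWithinAt)
    (fun x hx => ?_) ht
  linarith [hR x (mem_Ici_of_Ioi hx) (p x)]

theorem exists_forall_norm_dynamics_le {lam a : ℝ} {U : Set ℝ} {R B : ℝ → Matrix m m ℝ}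
    {S : ℝ → Matrix m k ℝ} {p : ℝ → m → ℝ} {r : ℝ → k → ℝ} {d : ℝ → m → ℝ}
    (hR : ∃ c, ∀ t ∈ U, ∀ i j, |R t i j| ≤ c) (hS : ∃ c, ∀ t ∈ U, ∀ i j, |S t i j| ≤ c)
    (hB : ∃ c, ∀ t ∈ U, ∀ i j, |B t i j| ≤ c) (hp : ∀ t ∈ U, ‖p t‖ ≤ a)
    (hr : ∀ t ∈ U, ‖r t‖ ≤ a) (hd : ∀ t ∈ U, ‖d t‖ ≤ a) :
    ∃ M, ∀ t ∈ U, ‖-((R t + lam • 1) *ᵥ p t) - S t *ᵥ r t + (B t)ᵀ *ᵥ d t‖ ≤ M := by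
  obtain ⟨CR, hCR, hR⟩ := exists_forall_norm_mulVec_le hR
  obtain ⟨CS, hCS, hS⟩ := exists_forall_norm_mulVec_le hS
  obtain ⟨cB, hcB⟩ := hB
  obtain ⟨CB, hCB, hB⟩ := exists_forall_norm_mulVec_le (A := fun t => (B t)ᵀ) (U := U)
    ⟨cB, fun t ht i j => hcB t ht j i⟩
  refine ⟨(CR + |lam| + CS + CB) * a, fun t ht => ?_⟩
  calc ‖-((R t + lam • 1) *ᵥ p t) - S t *ᵥ r t + (B t)ᵀ *ᵥ d t‖
      ≤ ‖R t *ᵥ p t‖ + ‖lam • p t‖ + ‖S t *ᵥ r t‖ + ‖(B t)ᵀ *ᵥ d t‖ := by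
        rw [add_mulVec, smul_mulVec, one_mulVec, neg_add, sub_eq_add_neg]
        exact norm_add₄_le.trans_eq (by rw [norm_neg, norm_neg, norm_neg])
    _ ≤ CR * a + |lam| * a + CS * a + CB * a := by
        rw [norm_smul, Real.norm_eq_abs]
        gcongr
        · exact (hR t ht _).trans (by gcongr; exact hp t ht)
        · exact hp t ht
        · exact (hS t ht _).trans (by gcongr; exact hr t ht)
        · exact (hB t ht _).trans (by gcongr; exact hd t ht)
    _ = (CR + |lam| + CS + CB) * a := by ring

end ErrorDynamics

theorem stmt11_general {n s : ℕ} (lam : ℝ) (hlam : 0 < lam)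
    (R : ℝ → Matrix (Fin n) (Fin n) ℝ)
    (hRbdd : ∃ c : ℝ, ∀ t ∈ Set.Ici (0:ℝ), ∀ i j : Fin n, |R t i j| ≤ c)
    (hRpsd : ∀ t ∈ Set.Ici (0:ℝ), ∀ x : Fin n → ℝ, 0 ≤ x ⬝ᵥ (R t *ᵥ x))
    (S : ℝ → Matrix (Fin n) (Fin s) ℝ)
    (hSbdd : ∃ c : ℝ, ∀ t ∈ Set.Ici (0:ℝ), ∀ (i : Fin n) (j : Fin s), |S t i j| ≤ c)
    (B : ℝ → Matrix (Fin n) (Fin n) ℝ)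
    (hBbdd : ∃ c : ℝ, ∀ t ∈ Set.Ici (0:ℝ), ∀ i j : Fin n, |B t i j| ≤ c)
    (pt : ℝ → Fin n → ℝ) (rt : ℝ → Fin s → ℝ) (dt : ℝ → Fin n → ℝ)
    (hp : ∀ t ∈ Set.Ici (0:ℝ),
      HasDerivWithinAt pt
        (-((R t + lam • (1 : Matrix (Fin n) (Fin n) ℝ)) *ᵥ pt t)
          - S t *ᵥ rt t + (B t)ᵀ *ᵥ dt t) (Set.Ici 0) t)
    (hr : ∀ t ∈ Set.Ici (0:ℝ),
      HasDerivWithinAt rt ((S t)ᵀ *ᵥ pt t) (Set.Ici 0) t)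
    (hd : ∀ t ∈ Set.Ici (0:ℝ),
      HasDerivWithinAt dt (-(B t *ᵥ pt t)) (Set.Ici 0) t) :
    Filter.Tendsto pt Filter.atTop (nhds 0) := by
  set E₀ := energy pt rt dt 0
  have hdiss : ∀ t ∈ Ici (0:ℝ), energy pt rt dt t + 2 * lam * ∫ x in 0..t, pt x ⬝ᵥ pt x ≤ E₀ :=
    fun t ht => energy_add_intervalIntegral_le hRpsd hp hr hd ht
  have hE : ∀ t ∈ Ici (0:ℝ), energy pt rt dt t ≤ E₀ := fun t ht => by
    have : 0 ≤ ∫ x in 0..t, pt x ⬝ᵥ pt x :=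
      intervalIntegral.integral_nonneg ht fun x _ => dotProduct_self_nonneg (pt x)
    nlinarith [hdiss t ht]
  have hpb : ∀ t ∈ Ici (0:ℝ), ‖pt t‖ ≤ √E₀ := fun t ht =>
    (norm_le_sqrt_energy pt rt dt t).1.trans (Real.sqrt_le_sqrt (hE t ht))
  have hrb : ∀ t ∈ Ici (0:ℝ), ‖rt t‖ ≤ √E₀ := fun t ht =>
    (norm_le_sqrt_energy pt rt dt t).2.1.trans (Real.sqrt_le_sqrt (hE t ht))
  have hdb : ∀ t ∈ Ici (0:ℝ), ‖dt t‖ ≤ √E₀ := fun t ht =>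
    (norm_le_sqrt_energy pt rt dt t).2.2.trans (Real.sqrt_le_sqrt (hE t ht))
  obtain ⟨M, hM⟩ := exists_forall_norm_dynamics_le (lam := lam) hRbdd hSbdd hBbdd hpb hrb hdb
  have hint : ∀ T ∈ Ici (0:ℝ), ∫ x in 0..T, pt x ⬝ᵥ pt x ≤ E₀ / (2 * lam) := fun T hT => by
    rw [le_div_iff₀ (by positivity)]
    linarith [hdiss T hT, energy_nonneg pt rt dt T]
  exact tendsto_zero_of_tendsto_dotProduct_self <|
    tendsto_zero_of_lipschitzOnWith_of_intervalIntegral_le (fun t _ => dotProduct_self_nonneg _)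
      (lipschitzOnWith_dotProduct_self (convex_Ici 0) hp hpb hM) hint

/-- for the error dynamics
`ṗ̃ = −(R + λI)p̃ − S r̃ + Bᵀ d̃`, `ṙ̃ = Sᵀ p̃`, `ḋ̃ = −B p̃`, with `R, S, B`
continuous and bounded and `R(t) ⪰ 0`, one has `p̃(t) → 0` as `t → ∞`. -/
theorem stmt11 {n s : ℕ} (lam : ℝ) (hlam : 0 < lam)
    (R : ℝ → Matrix (Fin n) (Fin n) ℝ)
    (hRcont : ∀ i j : Fin n, ContinuousOn (fun t => R t i j) (Set.Ici 0))
    (hRbdd : ∃ c : ℝ, ∀ t ∈ Set.Ici (0:ℝ), ∀ i j : Fin n, |R t i j| ≤ c)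
    (hRpsd : ∀ t ∈ Set.Ici (0:ℝ), ∀ x : Fin n → ℝ, 0 ≤ x ⬝ᵥ (R t *ᵥ x))
    (S : ℝ → Matrix (Fin n) (Fin s) ℝ)
    (hScont : ∀ (i : Fin n) (j : Fin s), ContinuousOn (fun t => S t i j) (Set.Ici 0))
    (hSbdd : ∃ c : ℝ, ∀ t ∈ Set.Ici (0:ℝ), ∀ (i : Fin n) (j : Fin s), |S t i j| ≤ c)
    (B : ℝ → Matrix (Fin n) (Fin n) ℝ)
    (hBcont : ∀ i j : Fin n, ContinuousOn (fun t => B t i j) (Set.Ici 0))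
    (hBbdd : ∃ c : ℝ, ∀ t ∈ Set.Ici (0:ℝ), ∀ i j : Fin n, |B t i j| ≤ c)
    (pt : ℝ → Fin n → ℝ) (rt : ℝ → Fin s → ℝ) (dt : ℝ → Fin n → ℝ)
    (hp : ∀ t ∈ Set.Ici (0:ℝ),
      HasDerivWithinAt pt
        (-((R t + lam • (1 : Matrix (Fin n) (Fin n) ℝ)) *ᵥ pt t)
          - S t *ᵥ rt t + (B t)ᵀ *ᵥ dt t) (Set.Ici 0) t)
    (hr : ∀ t ∈ Set.Ici (0:ℝ),
      HasDerivWithinAt rt ((S t)ᵀ *ᵥ pt t) (Set.Ici 0) t)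
    (hd : ∀ t ∈ Set.Ici (0:ℝ),
      HasDerivWithinAt dt (-(B t *ᵥ pt t)) (Set.Ici 0) t) :
    Filter.Tendsto pt Filter.atTop (nhds 0) :=
  stmt11_general lam hlam R hRbdd hRpsd S hSbdd B hBbdd pt rt dt hp hr hd
end

section
/- Let ψ > 0, let g : [0,∞) → ℝ be continuous with g(t) ≥ 0 for all t, and let r : [0,∞) → ℝ be C¹ satisfying ṙ(t) = −(ψ/4)(r(t) − 1) + (r(t)/ψ) g(t) for all t ≥ 0. If r(0) ≥ 1, then r(t) ≥ 1 for all t ≥ 0; that is, the set {r ∈ ℝ : r ≥ 1} is invariant for this dynamics. -/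
/-- for `ψ > 0`, `g` continuous and nonnegative on `[0,∞)`, and
`r` C¹ solving `ṙ = −(ψ/4)(r − 1) + (r/ψ) g(t)` on `[0,∞)`, if `r(0) ≥ 1` then
`r(t) ≥ 1` for all `t ≥ 0`: the set `{r ≥ 1}` is invariant. -/
theorem stmt13 (ψ : ℝ) (hψ : 0 < ψ)
    (g : ℝ → ℝ) (hgcont : ContinuousOn g (Set.Ici 0))
    (hgpos : ∀ t ∈ Set.Ici (0:ℝ), 0 ≤ g t)
    (r : ℝ → ℝ)
    (hr : ∀ t ∈ Set.Ici (0:ℝ),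
      HasDerivWithinAt r (-(ψ / 4) * (r t - 1) + (r t / ψ) * g t) (Set.Ici 0) t)
    (hr0 : 1 ≤ r 0) :
    ∀ t ∈ Set.Ici (0:ℝ), 1 ≤ r t := by
  have hrc : ContinuousOn r (Set.Ici 0) := fun x hx => (hr x hx).continuousWithinAt
  intro t₀ ht₀
  by_contra hlt
  push_neg at hlt
  -- the set of times in [0, t₀] where r ≥ 1
  set A : Set ℝ := Set.Icc 0 t₀ ∩ r ⁻¹' Set.Ici 1 with hA
  have hAne : A.Nonempty := ⟨0, ⟨le_refl 0, ht₀⟩, hr0⟩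
  have hAbdd : BddAbove A := ⟨t₀, fun x hx => hx.1.2⟩
  have hAclosed : IsClosed A :=
    (hrc.mono (Set.Icc_subset_Ici_self)).preimage_isClosed_of_isClosed isClosed_Icc isClosed_Ici
  set a := sSup A with ha
  have haA : a ∈ A := hAclosed.csSup_mem hAne hAbdd
  have ha0 : (0:ℝ) ≤ a := haA.1.1
  have hat₀ : a ≤ t₀ := haA.1.2
  have hra : 1 ≤ r a := haA.2
  have halt : a < t₀ := lt_of_le_of_ne hat₀ (fun h => absurd hra (by rw [h]; exact not_le.2 hlt))
  -- pick b ∈ (a, t₀] with r ≥ 0 on [a, b]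
  have hcontA : ContinuousWithinAt r (Set.Ici 0) a := hrc a ha0
  have hev : r ⁻¹' Set.Ioi 0 ∈ nhdsWithin a (Set.Ici 0) :=
    hcontA (Ioi_mem_nhds (show (0:ℝ) < r a by linarith))
  rcases Metric.mem_nhdsWithin_iff.1 hev with ⟨δ, hδ, hδball⟩
  set b := min (a + δ/2) t₀ with hb
  have hab : a < b := lt_min (by linarith) halt
  have hbt₀ : b ≤ t₀ := min_le_right _ _
  have hrpos : ∀ s ∈ Set.Icc a b, 0 ≤ r s := by
    intro s hs
    refine le_of_lt (hδball ⟨?_, le_trans ha0 hs.1⟩)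
    rw [Metric.mem_ball, Real.dist_eq, abs_lt]
    constructor
    · linarith [hs.1]
    · have := hs.2.trans (min_le_left _ _)
      linarith
  -- Grönwall on [a, b] for f = 1 - r
  have key : ∀ x ∈ Set.Icc a b, 1 - r x ≤ gronwallBound 0 (-(ψ/4)) 0 (x - a) := by
    apply le_gronwallBound_of_liminf_deriv_right_le
      (f' := fun x => -((-(ψ / 4) * (r x - 1) + (r x / ψ) * g x)))
    · exact (continuousOn_const.sub (hrc.mono (fun x hx => le_trans ha0 hx.1)))
    · intro x hx rr hrr
      have hd : HasDerivWithinAt (fun s => 1 - r s)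
          (-((-(ψ / 4) * (r x - 1) + (r x / ψ) * g x))) (Set.Ici x) x := by
        rw [neg_eq_zero_sub]
        exact (hasDerivWithinAt_const x _ 1).sub
          (((hr x (le_trans ha0 hx.1)).mono (Set.Ici_subset_Ici.2 (le_trans ha0 hx.1))))
      exact hd.liminf_right_slope_le hrr
    · linarith
    · intro x hx
      have hx0 : (0:ℝ) ≤ x := le_trans ha0 hx.1
      have h1 : 0 ≤ (r x / ψ) * g x :=
        mul_nonneg (div_nonneg (hrpos x ⟨hx.1, hx.2.le⟩) hψ.le) (hgpos x hx0)
      have : -(-(ψ / 4) * (r x - 1) + (r x / ψ) * g x)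
          = -(ψ/4) * (1 - r x) - (r x / ψ) * g x := by ring
      rw [this]
      linarith
  have hbA : b ∈ A := by
    have := key b ⟨hab.le, le_refl b⟩
    rw [gronwallBound_ε0_δ0] at this
    exact ⟨⟨le_trans ha0 hab.le, hbt₀⟩, by simpa using by linarith⟩
  have : b ≤ a := le_csSup hAbdd hbA
  linarith
end

section
/- Let m_r, m, L₃ > 0 and set a = 1/√(m_r + m), c = √((m_r + m)/(m L₃² m_r)), b = 1/(c L₃ m_r). Define T : ℝ³ → ℝ^{3×3} by T(q) = [[a, 0, −b cos q₃], [0, a, −b sin q₃], [0, 0, c]] and Q : ℝ³ → ℝ³ by Q(q) = ((1/a) q₁ + a L₃ m sin q₃, (1/a) q₂ − a L₃ m cos q₃, (1/c) q₃). Then Q is smooth and its Jacobian satisfies ∇Q(q) = T(q)^{-1} for all q ∈ ℝ³; equivalently, ∇Q(q) · T(q) = I₃ for all q ∈ ℝ³. -/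
open Matrix

noncomputable def jacobianMatrix {n : ℕ} (X : (Fin n → ℝ) → (Fin n → ℝ)) (q : Fin n → ℝ) :
    Matrix (Fin n) (Fin n) ℝ :=
  Matrix.of fun i j => fderiv ℝ X q (Pi.single j 1) i

/-- 2D spider crane gantry cart. The map `Q` is smooth and its
Jacobian satisfies `∇Q(q) = T(q)⁻¹`, equivalently `∇Q(q) · T(q) = I₃`. -/
theorem stmt15 (mr m L3 : ℝ) (hmr : 0 < mr) (hm : 0 < m) (hL3 : 0 < L3)
    (a b c : ℝ)
    (ha : a = 1 / Real.sqrt (mr + m))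
    (hc : c = Real.sqrt ((mr + m) / (m * L3 ^ 2 * mr)))
    (hb : b = 1 / (c * L3 * mr))
    (T : (Fin 3 → ℝ) → Matrix (Fin 3) (Fin 3) ℝ)
    (hT : ∀ q : Fin 3 → ℝ, T q =
      !![a, 0, -(b * Real.cos (q 2));
         0, a, -(b * Real.sin (q 2));
         0, 0, c])
    (Q : (Fin 3 → ℝ) → (Fin 3 → ℝ))
    (hQ : ∀ q : Fin 3 → ℝ, Q q =
      ![(1 / a) * q 0 + a * L3 * m * Real.sin (q 2),
        (1 / a) * q 1 - a * L3 * m * Real.cos (q 2),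
        (1 / c) * q 2]) :
    ContDiff ℝ (⊤ : ℕ∞) Q ∧
    (∀ q : Fin 3 → ℝ,
      jacobianMatrix Q q = (T q)⁻¹ ∧ jacobianMatrix Q q * T q = 1) := by
  have hs : (0:ℝ) < mr + m := by linarith
  have ha0 : a ≠ 0 := by
    rw [ha]; positivity
  have hc0 : 0 < c := by
    rw [hc]; apply Real.sqrt_pos.2; positivity
  have hc2 : c ^ 2 = (mr + m) / (m * L3 ^ 2 * mr) := by
    rw [hc, Real.sq_sqrt]; positivity
  have ha2 : a ^ 2 = 1 / (mr + m) := by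
    rw [ha, div_pow, one_pow, Real.sq_sqrt hs.le]
  have hkey : (1 / a) * b = a * L3 * m * c := by
    have h1 : a ^ 2 * (mr + m) = 1 := by rw [ha2]; field_simp
    have h2 : c ^ 2 * (m * L3 ^ 2 * mr) = mr + m := by
      rw [hc2]; field_simp
    rw [hb]
    field_simp
    nlinarith [hc0, hL3, hm, hmr, sq_nonneg (a*c)]
  have hQ' : Q = fun q => ![(1 / a) * q 0 + a * L3 * m * Real.sin (q 2),
        (1 / a) * q 1 - a * L3 * m * Real.cos (q 2),
        (1 / c) * q 2] := funext hQ
  have hcd : ContDiff ℝ (⊤ : ℕ∞) Q := by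
    rw [hQ']
    apply contDiff_pi.2
    intro i
    fin_cases i <;> simp only [Matrix.cons_val_zero, Matrix.cons_val_one, Matrix.head_cons,
      Matrix.cons_val_two, Matrix.tail_cons]
    · exact (contDiff_const.mul (contDiff_apply (𝕜 := ℝ) (E := ℝ) _)).add
        (contDiff_const.mul (contDiff_apply (𝕜 := ℝ) (E := ℝ) 2).sin)
    · exact (contDiff_const.mul (contDiff_apply (𝕜 := ℝ) (E := ℝ) _)).sub
        (contDiff_const.mul (contDiff_apply (𝕜 := ℝ) (E := ℝ) 2).cos)
    · exact contDiff_const.mul (contDiff_apply (𝕜 := ℝ) (E := ℝ) _)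
  refine ⟨hcd, fun q => ?_⟩
  -- derivative
  set p := ContinuousLinearMap.proj (R := ℝ) (φ := fun _ : Fin 3 => ℝ)
  have hD : HasFDerivAt Q (ContinuousLinearMap.pi
      ![((1:ℝ)/a) • p 0 + (a * L3 * m) • (Real.cos (q 2) • p 2),
        ((1:ℝ)/a) • p 1 - (a * L3 * m) • ((-Real.sin (q 2)) • p 2),
        ((1:ℝ)/c) • p 2]) q := by
    rw [hQ']
    apply hasFDerivAt_pi.2
    intro i
    fin_cases i <;> simp only [Matrix.cons_val_zero, Matrix.cons_val_one, Matrix.head_cons,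
      Matrix.cons_val_two, Matrix.tail_cons]
    · exact ((hasFDerivAt_apply 0 q).const_mul _).add
        (((hasFDerivAt_apply 2 q).sin.const_mul _))
    · exact ((hasFDerivAt_apply 1 q).const_mul _).sub
        (((hasFDerivAt_apply 2 q).cos.const_mul _))
    · exact (hasFDerivAt_apply 2 q).const_mul _
  have hJ : jacobianMatrix Q q =
      !![1/a, 0, a * L3 * m * Real.cos (q 2);
         0, 1/a, a * L3 * m * Real.sin (q 2);
         0, 0, 1/c] := by
    ext i j
    simp only [jacobianMatrix, Matrix.of_apply, hD.fderiv]
    fin_cases i <;> fin_cases j <;>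
      simp [ContinuousLinearMap.pi_apply, Pi.single_apply, p, Matrix.vecHead, Matrix.vecTail]
  have hmul : jacobianMatrix Q q * T q = 1 := by
    rw [hJ, hT]
    ext i j
    fin_cases i <;> fin_cases j <;>
      simp [Matrix.mul_apply, Fin.sum_univ_three, Matrix.one_apply, Matrix.vecHead,
        Matrix.vecTail] <;>
      first
        | ring1
        | exact mul_inv_cancel₀ ha0
        | exact mul_inv_cancel₀ hc0.ne'
        | linear_combination (-Real.cos (q 2)) * hkey
        | linear_combination (-Real.sin (q 2)) * hkey
        | field_simp
  exact ⟨Matrix.inv_eq_left_inv hmul ▸ rfl, hmul⟩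
end

section
/- Let I > 0, a₂ > 0, a₃ > 0, M > 0, m > 0, and write S₁₂ = sin(q₁ + q₂), C₁₂ = cos(q₁ + q₂). Define T : ℝ⁴ → ℝ^{4×4} by T(q) = [[1/√I, 0, 0, 0], [−1/√I, 1/a₂, 0, 0], [0, −√(M/m)(1/a₃) S₁₂, 1/a₃, 0], [0, √(M/m)(1/a₃) C₁₂, 0, 1/a₃]] and Q : ℝ⁴ → ℝ⁴ by Q(q) = (√I q₁, a₂(q₁ + q₂), −a₂ √(M/m) C₁₂ + a₃ q₃, −a₂ √(M/m) S₁₂ + a₃ q₄). Then Q is smooth and its Jacobian satisfies ∇Q(q) · T(q) = I₄ for all q ∈ ℝ⁴, i.e. ∇Q(q) = T(q)^{-1}. -/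
set_option maxHeartbeats 1000000


open Matrix

/-- planar redundant manipulator with one elastic degree of
freedom. The map `Q` is smooth and its Jacobian satisfies
`∇Q(q) · T(q) = I₄`, i.e. `∇Q(q) = T(q)⁻¹`. -/
theorem stmt16 (I a2 a3 M m : ℝ)
    (hI : 0 < I) (ha2 : 0 < a2) (ha3 : 0 < a3) (hM : 0 < M) (hm : 0 < m)
    (T : (Fin 4 → ℝ) → Matrix (Fin 4) (Fin 4) ℝ)
    (hT : ∀ q : Fin 4 → ℝ, T q =
      !![1 / Real.sqrt I, 0, 0, 0;
         -(1 / Real.sqrt I), 1 / a2, 0, 0;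
         0, -(Real.sqrt (M / m) * (1 / a3) * Real.sin (q 0 + q 1)), 1 / a3, 0;
         0, Real.sqrt (M / m) * (1 / a3) * Real.cos (q 0 + q 1), 0, 1 / a3])
    (Q : (Fin 4 → ℝ) → (Fin 4 → ℝ))
    (hQ : ∀ q : Fin 4 → ℝ, Q q =
      ![Real.sqrt I * q 0,
        a2 * (q 0 + q 1),
        -(a2 * Real.sqrt (M / m) * Real.cos (q 0 + q 1)) + a3 * q 2,
        -(a2 * Real.sqrt (M / m) * Real.sin (q 0 + q 1)) + a3 * q 3]) :
    ContDiff ℝ (⊤ : ℕ∞) Q ∧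
    (∀ q : Fin 4 → ℝ,
      jacobianMatrix Q q * T q = 1 ∧ jacobianMatrix Q q = (T q)⁻¹) := by
  have hQ' : Q = fun q : Fin 4 → ℝ =>
      ![Real.sqrt I * q 0,
        a2 * (q 0 + q 1),
        -(a2 * Real.sqrt (M / m) * Real.cos (q 0 + q 1)) + a3 * q 2,
        -(a2 * Real.sqrt (M / m) * Real.sin (q 0 + q 1)) + a3 * q 3] := funext hQ
  subst hQ'
  set c : ℝ := a2 * Real.sqrt (M / m) with hc
  -- sum map
  have hs : ∀ q : Fin 4 → ℝ, HasFDerivAt (fun q : Fin 4 → ℝ => q 0 + q 1)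
      ((ContinuousLinearMap.proj 0 : (Fin 4 → ℝ) →L[ℝ] ℝ) + (ContinuousLinearMap.proj 1 : (Fin 4 → ℝ) →L[ℝ] ℝ)) q := fun q =>
    (hasFDerivAt_apply 0 q).add (hasFDerivAt_apply 1 q)
  -- derivative of Q at q
  have key : ∀ q : Fin 4 → ℝ, HasFDerivAt
      (fun q : Fin 4 → ℝ =>
        ![Real.sqrt I * q 0,
          a2 * (q 0 + q 1),
          -(c * Real.cos (q 0 + q 1)) + a3 * q 2,
          -(c * Real.sin (q 0 + q 1)) + a3 * q 3])
      (ContinuousLinearMap.pi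
        ![Real.sqrt I • (ContinuousLinearMap.proj 0 : (Fin 4 → ℝ) →L[ℝ] ℝ),
          a2 • ((ContinuousLinearMap.proj 0 : (Fin 4 → ℝ) →L[ℝ] ℝ) + (ContinuousLinearMap.proj 1 : (Fin 4 → ℝ) →L[ℝ] ℝ)),
          -(c • ((-Real.sin (q 0 + q 1)) • ((ContinuousLinearMap.proj 0 : (Fin 4 → ℝ) →L[ℝ] ℝ) + (ContinuousLinearMap.proj 1 : (Fin 4 → ℝ) →L[ℝ] ℝ))))
            + a3 • (ContinuousLinearMap.proj 2 : (Fin 4 → ℝ) →L[ℝ] ℝ),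
          -(c • (Real.cos (q 0 + q 1) • ((ContinuousLinearMap.proj 0 : (Fin 4 → ℝ) →L[ℝ] ℝ) + (ContinuousLinearMap.proj 1 : (Fin 4 → ℝ) →L[ℝ] ℝ))))
            + a3 • (ContinuousLinearMap.proj 3 : (Fin 4 → ℝ) →L[ℝ] ℝ)]) q := by
    intro q
    rw [hasFDerivAt_pi']
    intro i
    fin_cases i
    · simpa using (hasFDerivAt_apply 0 q).const_mul (Real.sqrt I)
    · simpa using (hs q).const_mul a2
    · simpa [Pi.add_def, Pi.neg_def] using
        ((((Real.hasDerivAt_cos (q 0 + q 1)).comp_hasFDerivAt q (hs q)).const_mul c).neg).add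
          ((hasFDerivAt_apply 2 q).const_mul a3)
    · simpa [Pi.add_def, Pi.neg_def] using
        ((((Real.hasDerivAt_sin (q 0 + q 1)).comp_hasFDerivAt q (hs q)).const_mul c).neg).add
          ((hasFDerivAt_apply 3 q).const_mul a3)
  constructor
  · rw [contDiff_pi]
    intro i
    fin_cases i <;> simp
    · fun_prop
    · fun_prop
    · exact ((contDiff_const.mul (Real.contDiff_cos.comp (by fun_prop))).neg).add
        (contDiff_const.mul (by fun_prop))
    · exact ((contDiff_const.mul (Real.contDiff_sin.comp (by fun_prop))).neg).add
        (contDiff_const.mul (by fun_prop))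
  · intro q
    have hj : jacobianMatrix (fun q : Fin 4 → ℝ =>
        ![Real.sqrt I * q 0,
          a2 * (q 0 + q 1),
          -(c * Real.cos (q 0 + q 1)) + a3 * q 2,
          -(c * Real.sin (q 0 + q 1)) + a3 * q 3]) q =
        !![Real.sqrt I, 0, 0, 0;
           a2, a2, 0, 0;
           c * Real.sin (q 0 + q 1), c * Real.sin (q 0 + q 1), a3, 0;
           -(c * Real.cos (q 0 + q 1)), -(c * Real.cos (q 0 + q 1)), 0, a3] := by
      have := (key q).fderiv
      ext i j
      simp only [jacobianMatrix, Matrix.of_apply, this]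
      fin_cases i <;> fin_cases j <;>
        simp [ContinuousLinearMap.pi_apply, Pi.single_apply, Fin.ext_iff,
          show ((3 : Fin 4) : ℕ) = 3 from rfl] <;>
        norm_num <;> ring
    have hIs : Real.sqrt I ≠ 0 := ne_of_gt (Real.sqrt_pos.mpr hI)
    have hmul : jacobianMatrix (fun q : Fin 4 → ℝ =>
        ![Real.sqrt I * q 0,
          a2 * (q 0 + q 1),
          -(c * Real.cos (q 0 + q 1)) + a3 * q 2,
          -(c * Real.sin (q 0 + q 1)) + a3 * q 3]) q * T q = 1 := by
      rw [hj, hT q]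
      ext i j
      fin_cases i <;> fin_cases j <;>
        simp [Matrix.mul_apply, Fin.sum_univ_four, Matrix.one_apply, Fin.ext_iff, hc,
          Matrix.vecHead, Matrix.vecTail, show ((3 : Fin 4) : ℕ) = 3 from rfl] <;>
        (try field_simp) <;>
        first
          | ring
          | simp [Matrix.vecHead, Matrix.vecTail]
          | exact Or.inr rfl
    exact ⟨hmul, (Matrix.inv_eq_left_inv hmul).symm⟩
end
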